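/- Let B be a non-archimedean base of a frame A and let B̄ = {sSup C | C is a nonempty chain contained in B}. Then B̄ is closed under suprema of chains: for every nonempty chain D contained in B̄, sSup D ∈ B̄. -/

import Mathlib

/-! If `x = sSup C` for a chain `C ⊆ B` and `⊥ ≠ u ∈ B` lies below `x`, frame distributivity makes
`u` meet some member of `C`; by trichotomy every member of `C` then lies below `u` or below a member
of `C` above `u`, so `x = sSup (B ∩ [u, x])`. Trichotomy also makes the elements of `B` above `u` a
chain. For the chain `D` with `sSup D ≠ ⊥`, fix such a `u` below some `d₀ ∈ D`: each `d ∈ D` lies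
below a common upper bound `m ∈ D` of `d` and `d₀`, whence `sSup D = sSup (B ∩ [u, sSup D])`. -/

section

variable {A : Type*}

def IsNonArchimedean [SemilatticeInf A] [OrderBot A] (B : Set A) : Prop :=
  ∀ b₁ ∈ B, ∀ b₂ ∈ B, b₁ ⊓ b₂ = ⊥ ∨ b₁ ≤ b₂ ∨ b₂ ≤ b₁

def chainSups [CompleteLattice A] (B : Set A) : Set A :=
  {x | ∃ C ⊆ B, C.Nonempty ∧ IsChain (· ≤ ·) C ∧ sSup C = x}

theorem exists_inf_ne_bot_of_le_sSup [Order.Frame A] {u : A} {C : Set A}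
    (hu : u ≠ ⊥) (huC : u ≤ sSup C) : ∃ c ∈ C, u ⊓ c ≠ ⊥ := by
  by_contra! h
  apply hu
  rw [← inf_eq_left.mpr huC, inf_sSup_eq]
  exact iSup₂_eq_bot.mpr h

namespace IsNonArchimedean

section SemilatticeInf

variable [SemilatticeInf A] [OrderBot A] {B : Set A}

theorem le_or_le_of_inf_ne_bot (hB : IsNonArchimedean B) {b₁ b₂ : A} (h₁ : b₁ ∈ B) (h₂ : b₂ ∈ B)
    (h : b₁ ⊓ b₂ ≠ ⊥) : b₁ ≤ b₂ ∨ b₂ ≤ b₁ :=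
  (hB b₁ h₁ b₂ h₂).resolve_left h

theorem isChain_inter_Ici (hB : IsNonArchimedean B) {u : A} (hu : u ≠ ⊥) :
    IsChain (· ≤ ·) (B ∩ Set.Ici u) := by
  intro x hx y hy _
  refine hB.le_or_le_of_inf_ne_bot hx.1 hy.1 fun h => hu ?_
  exact le_bot_iff.mp (h ▸ le_inf hx.2 hy.2)

end SemilatticeInf

variable [Order.Frame A] {B : Set A}

theorem sSup_eq_sup_sSup_sep_le (hB : IsNonArchimedean B) {C : Set A} (hCB : C ⊆ B)
    (hC : IsChain (· ≤ ·) C) {u : A} (huB : u ∈ B) (hu : u ≠ ⊥) (huC : u ≤ sSup C) :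
    sSup C = u ⊔ sSup {c ∈ C | u ≤ c} := by
  refine le_antisymm (sSup_le fun c hc => ?_) (sup_le huC (sSup_le_sSup fun _ h => h.1))
  obtain ⟨c', hc', huc'⟩ := exists_inf_ne_bot_of_le_sSup hu huC
  obtain ⟨m, hm, hcm, hc'm⟩ := hC.directedOn c hc c' hc'
  have hum : u ⊓ m ≠ ⊥ := fun h => huc' (le_bot_iff.mp (h ▸ inf_le_inf_left u hc'm))
  rcases hB.le_or_le_of_inf_ne_bot huB (hCB hm) hum with hle | hle
  · exact hcm.trans (le_sup_of_le_right (le_sSup ⟨hm, hle⟩))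
  · exact hcm.trans (hle.trans le_sup_left)

theorem sSup_inter_Icc (hB : IsNonArchimedean B) {x u : A} (hx : x ∈ chainSups B)
    (huB : u ∈ B) (hu : u ≠ ⊥) (hux : u ≤ x) : sSup (B ∩ Set.Icc u x) = x := by
  refine le_antisymm (sSup_le fun _ h => h.2.2) ?_
  obtain ⟨C, hCB, -, hC, rfl⟩ := hx
  calc sSup C = u ⊔ sSup {c ∈ C | u ≤ c} := hB.sSup_eq_sup_sSup_sep_le hCB hC huB hu hux
    _ ≤ sSup (B ∩ Set.Icc u (sSup C)) :=
      sup_le (le_sSup ⟨huB, le_rfl, hux⟩)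
        (sSup_le_sSup fun c hc => ⟨hCB hc.1, hc.2, le_sSup hc.1⟩)

end IsNonArchimedean

end

theorem sSup_chains_closed_under_sSup_of_chains_general
    {A : Type*} [Order.Frame A] (B : Set A)
    (htri : ∀ b₁ ∈ B, ∀ b₂ ∈ B, b₁ ⊓ b₂ = ⊥ ∨ b₁ ≤ b₂ ∨ b₂ ≤ b₁) :
    ∀ D : Set A,
      D ⊆ {x : A | ∃ C : Set A, C ⊆ B ∧ C.Nonempty ∧ IsChain (· ≤ ·) C ∧ sSup C = x} →
      D.Nonempty → IsChain (· ≤ ·) D →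
      sSup D ∈ {x : A | ∃ C : Set A, C ⊆ B ∧ C.Nonempty ∧ IsChain (· ≤ ·) C ∧ sSup C = x} := by
  intro D hD hDne hDch
  have hB : IsNonArchimedean B := htri
  obtain hbot | hbot := eq_or_ne (sSup D) ⊥
  · obtain ⟨d₀, hd₀⟩ := hDne
    rw [hbot, ← le_bot_iff.mp (hbot ▸ le_sSup hd₀)]
    exact hD hd₀
  obtain ⟨d₀, hd₀, hd₀_ne⟩ : ∃ d ∈ D, d ≠ ⊥ := by simpa [sSup_eq_bot] using hbot
  obtain ⟨u, huB, hud₀, hu⟩ : ∃ u ∈ B, u ≤ d₀ ∧ u ≠ ⊥ := by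
    obtain ⟨C, hCB, -, -, rfl⟩ := hD hd₀
    obtain ⟨c, hc, hc_ne⟩ : ∃ c ∈ C, c ≠ ⊥ := by simpa [sSup_eq_bot] using hd₀_ne
    exact ⟨c, hCB hc, le_sSup hc, hc_ne⟩
  have huD : u ≤ sSup D := hud₀.trans (le_sSup hd₀)
  refine ⟨B ∩ Set.Icc u (sSup D), Set.inter_subset_left, ⟨u, huB, le_rfl, huD⟩,
    (hB.isChain_inter_Ici hu).mono (Set.inter_subset_inter_right B Set.Icc_subset_Ici_self),
    le_antisymm (sSup_le fun _ h => h.2.2) (sSup_le fun d hd => ?_)⟩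
  obtain ⟨m, hm, hdm, hd₀m⟩ := hDch.directedOn d hd d₀ hd₀
  calc d ≤ m := hdm
    _ = sSup (B ∩ Set.Icc u m) := (hB.sSup_inter_Icc (hD hm) huB hu (hud₀.trans hd₀m)).symm
    _ ≤ sSup (B ∩ Set.Icc u (sSup D)) :=
      sSup_le_sSup (Set.inter_subset_inter_right _ (Set.Icc_subset_Icc_right (le_sSup hm)))

/-- The base of suprema of nonempty chains of a non-archimedean base is
closed under suprema of nonempty chains. -/
theorem sSup_chains_closed_under_sSup_of_chains
    {A : Type*} [Order.Frame A] (B : Set A)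
    (hbase : ∀ a : A, a = sSup {b ∈ B | b ≤ a})
    (htri : ∀ b₁ ∈ B, ∀ b₂ ∈ B, b₁ ⊓ b₂ = ⊥ ∨ b₁ ≤ b₂ ∨ b₂ ≤ b₁) :
    ∀ D : Set A,
      D ⊆ {x : A | ∃ C : Set A, C ⊆ B ∧ C.Nonempty ∧ IsChain (· ≤ ·) C ∧ sSup C = x} →
      D.Nonempty → IsChain (· ≤ ·) D →
      sSup D ∈ {x : A | ∃ C : Set A, C ⊆ B ∧ C.Nonempty ∧ IsChain (· ≤ ·) C ∧ sSup C = x} :=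
  sSup_chains_closed_under_sSup_of_chains_general B htri
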